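/- Let I_1,…,I_k be finite sets and Φ ⊆ Ψ ⊆ I_1×⋯×I_k. If Ψ ⊵ Φ (Φ is a combinatorial degeneration of Ψ), then Q̃(Ψ) ≥ Q(Φ), i.e., the asymptotic subrank of Ψ is at least the subrank of Φ. -/

import Mathlib

open scoped BigOperators
open scoped Classical
open scoped ComplexOrder

noncomputable section

namespace CVZ

variable {k : ℕ}

/-- A concrete `k`-tensor over `F` with index types `I i`: the coefficient array
(in the standard bases) of a multilinear map `V₁ × ⋯ × V_k → F` with `dim V_i = |I i|`. -/
abbrev Tensor (F : Type*) (I : Fin k → Type*) : Type _ := (∀ i, I i) → F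

section Basic

variable {F : Type*} [Field F] {I J : Fin k → Type*}
  [∀ i, Fintype (I i)] [∀ i, DecidableEq (I i)]
  [∀ i, Fintype (J i)] [∀ i, DecidableEq (J i)]

/-- Coefficient array of the restriction `f ∘ (A₁, …, A_k)`, where `A_i : W_i → V_i`
is given by the matrix `A i`. -/
def restrictBy (A : ∀ i, Matrix (I i) (J i) F) (t : Tensor F I) : Tensor F J :=
  fun β => ∑ α : ∀ i, I i, (∏ i, A i (α i) (β i)) * t α

/-- `t` restricts to `s`. -/
def Restricts (t : Tensor F I) (s : Tensor F J) : Prop :=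
  ∃ A : ∀ i, Matrix (I i) (J i) F, restrictBy A t = s

/-- A choice of bases of the spaces `V_i`, encoded as a tuple of invertible matrices. -/
def IsBasisTuple (B : ∀ i, Matrix (I i) (I i) F) : Prop := ∀ i, IsUnit (B i)

/-- Support of a tensor (with respect to the standard bases). -/
def supp (t : Tensor F I) : Set (∀ i, I i) := {α | t α ≠ 0}

end Basic

section Entropy

/-- A probability distribution on the finite set `X`. -/
def IsProbDist {X : Type*} [Fintype X] (P : X → ℝ) : Prop :=
  (∀ x, 0 ≤ P x) ∧ ∑ x, P x = 1

/-- Base-2 Shannon entropy. -/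
def H2 {X : Type*} [Fintype X] (P : X → ℝ) : ℝ :=
  ∑ x, -(P x * Real.logb 2 (P x))

variable {I : Fin k → Type*} [∀ i, Fintype (I i)] [∀ i, DecidableEq (I i)]

/-- The `i`-th marginal of a distribution on a product set. -/
def marg (P : (∀ i, I i) → ℝ) (i : Fin k) : I i → ℝ :=
  fun a => ∑ α : ∀ i, I i, if α i = a then P α else 0

/-- `H_θ(P)`, the `θ`-weighted average of the marginal entropies. -/
def Hw (θ : Fin k → ℝ) (P : (∀ i, I i) → ℝ) : ℝ :=
  ∑ i, θ i * H2 (marg P i)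

/-- `H_θ(Φ)`, the supremum of `H_θ(P)` over distributions `P` supported on `Φ`. -/
def HwSet (θ : Fin k → ℝ) (Φ : Set (∀ i, I i)) : ℝ :=
  sSup {h | ∃ P : (∀ i, I i) → ℝ, IsProbDist P ∧ (∀ α, P α ≠ 0 → α ∈ Φ) ∧ h = Hw θ P}

/-- Maximal points of a subset of the product order. -/
def maxPoints [∀ i, LinearOrder (I i)] (Φ : Set (∀ i, I i)) : Set (∀ i, I i) :=
  {α | α ∈ Φ ∧ ∀ β ∈ Φ, ¬ α < β}

end Entropy

section SuppFunc

variable {F : Type*} [Field F] {I : Fin k → Type*} [∀ i, Fintype (I i)] [∀ i, DecidableEq (I i)]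

/-- The logarithmic Strassen upper support functional `ρ^θ`. -/
def rhoUpper (θ : Fin k → ℝ) (t : Tensor F I) : ℝ :=
  sInf {h | ∃ B : ∀ i, Matrix (I i) (I i) F, IsBasisTuple B ∧
    h = HwSet θ (supp (restrictBy B t))}

/-- The Strassen upper support functional `ζ^θ`. -/
def zetaUpper (θ : Fin k → ℝ) (t : Tensor F I) : ℝ :=
  if t = 0 then 0 else (2 : ℝ) ^ rhoUpper θ t

/-- The logarithmic Strassen lower support functional `ρ_θ`. -/
def rhoLower [∀ i, LinearOrder (I i)] (θ : Fin k → ℝ) (t : Tensor F I) : ℝ :=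
  sSup {h | ∃ B : ∀ i, Matrix (I i) (I i) F, IsBasisTuple B ∧
    h = HwSet θ (maxPoints (supp (restrictBy B t)))}

/-- The Strassen lower support functional `ζ_θ`. -/
def zetaLower [∀ i, LinearOrder (I i)] (θ : Fin k → ℝ) (t : Tensor F I) : ℝ :=
  if t = 0 then 0 else (2 : ℝ) ^ rhoLower θ t

/-- The instability of a tensor. -/
def instab (t : Tensor F I) : ℝ :=
  sSup {ε : ℝ | 0 ≤ ε ∧ ∃ B : ∀ i, Matrix (I i) (I i) F, IsBasisTuple B ∧
    ∃ w : ∀ i, I i → ℝ, (∀ i x, 0 ≤ w i x) ∧ (∀ i, ∃ x, w i x ≠ 0) ∧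
      ∀ a ∈ supp (restrictBy B t), ∑ i, w i (a i) ≤
        ∑ i, ((∑ x : I i, w i x) / (Fintype.card (I i) : ℝ) - ε * ⨆ x : I i, w i x)}

end SuppFunc

section Ops

variable {F : Type*} [Field F]

/-- The unit tensor `⟨r⟩`. -/
def unitTensor (F : Type*) [Field F] (k r : ℕ) : Tensor F (fun _ : Fin k => Fin r) :=
  fun α => if ∀ i j : Fin k, α i = α j then 1 else 0

variable {n m : Fin k → ℕ}

/-- Direct sum of two tensors, with the concatenated (naturally ordered) bases. -/
def dirSumFin (s : Tensor F fun i => Fin (n i)) (t : Tensor F fun i => Fin (m i)) :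
    Tensor F fun i => Fin (n i + m i) :=
  fun α =>
    (if h : ∀ i, (α i : ℕ) < n i then s (fun i => ⟨(α i : ℕ), h i⟩) else 0) +
    (if h : ∀ i, n i ≤ (α i : ℕ) then
      t (fun i => ⟨(α i : ℕ) - n i, by have h1 := (α i).isLt; have h2 := h i; omega⟩) else 0)

/-- Tensor (Kronecker) product of two tensors, with the product bases ordered naturally. -/
def tensMulFin (s : Tensor F fun i => Fin (n i)) (t : Tensor F fun i => Fin (m i)) :
    Tensor F fun i => Fin (n i * m i) :=
  fun α =>
    s (fun i => ⟨(α i : ℕ) / m i, by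
      have h := (α i).isLt
      exact Nat.div_lt_of_lt_mul (lt_of_lt_of_le h (Nat.mul_comm (n i) (m i)).le)⟩) *
    t (fun i => ⟨(α i : ℕ) % m i, by
      have h := (α i).isLt
      have hpos : 0 < n i * m i := Nat.lt_of_le_of_lt (Nat.zero_le _) h
      have hm : 0 < m i := by
        rcases Nat.eq_zero_or_pos (m i) with h0 | h0
        · simp [h0] at hpos
        · exact h0
      exact Nat.mod_lt _ hm⟩)

/-- The `N`-th tensor power of a tensor (grouping the legs into `k` groups). -/
def tpow {I : Fin k → Type*} (t : Tensor F I) (N : ℕ) : Tensor F fun i => Fin N → I i :=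
  fun α => ∏ j : Fin N, t fun i => α i j

end Ops

section Subrank

variable {F : Type*} [Field F] {I : Fin k → Type*} [∀ i, Fintype (I i)] [∀ i, DecidableEq (I i)]

/-- The subrank `Q(t)` of a tensor: the largest `r` with `⟨r⟩ ≤ t`. -/
def Qtensor (t : Tensor F I) : ℕ :=
  sSup {r : ℕ | Restricts t (unitTensor F k r)}

/-- A slice: a tensor of the form `v ⊗ w` with `v` in the `j`-th leg. -/
def IsSlice (s : Tensor F I) : Prop :=
  ∃ (j : Fin k) (v : I j → F) (w : (∀ i : {i : Fin k // i ≠ j}, I i.1) → F),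
    ∀ α, s α = v (α j) * w (fun i => α i.1)

/-- The slice rank of a tensor. -/
def sliceRank (t : Tensor F I) : ℕ :=
  sInf {r : ℕ | ∃ c : Fin r → Tensor F I, (∀ a, IsSlice (c a)) ∧ t = ∑ a, c a}

end Subrank

section Combinatorial

variable {I : Fin k → Type*}

/-- A diagonal: any two distinct elements differ in all coordinates. -/
def IsDiagonal (D : Set (∀ i, I i)) : Prop :=
  ∀ a ∈ D, ∀ b ∈ D, a ≠ b → ∀ i, a i ≠ b i

/-- The `i`-th projection of a set of tuples. -/
def projSet (D : Set (∀ i, I i)) (i : Fin k) : Set (I i) := {x | ∃ a ∈ D, a i = x}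

/-- A free diagonal in `Φ`: a diagonal `D` with `D = Φ ∩ (D₁ × ⋯ × D_k)`. -/
def IsFreeDiagonal (D Φ : Set (∀ i, I i)) : Prop :=
  IsDiagonal D ∧ D = Φ ∩ {a | ∀ i, a i ∈ projSet D i}

/-- The (combinatorial) subrank of a set: the maximal size of a free diagonal. -/
def Qset (Φ : Set (∀ i, I i)) : ℕ :=
  sSup {r : ℕ | ∃ D : Set (∀ i, I i), IsFreeDiagonal D Φ ∧ D.ncard = r}

/-- The `N`-fold coordinatewise power of a set of tuples. -/
def setPow (Φ : Set (∀ i, I i)) (N : ℕ) : Set (∀ i, Fin N → I i) :=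
  {α | ∀ j : Fin N, (fun i => α i j) ∈ Φ}

/-- A tight set. -/
def TightSet (Φ : Set (∀ i, I i)) : Prop :=
  ∃ u : ∀ i, I i → ℤ, (∀ i, Function.Injective (u i)) ∧ ∀ α ∈ Φ, ∑ i, u i (α i) = 0

/-- `Φ` is a combinatorial degeneration of `Ψ` (written `Ψ ⊵ Φ`). -/
def CombDegen (Ψ Φ : Set (∀ i, I i)) : Prop :=
  Φ ⊆ Ψ ∧ ∃ u : ∀ i, I i → ℤ,
    (∀ α ∈ Φ, ∑ i, u i (α i) = 0) ∧ ∀ α ∈ Ψ, α ∉ Φ → 0 < ∑ i, u i (α i)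

end Combinatorial

/-- A tight tensor: some basis tuple gives a tight support. -/
def TightTensor {F : Type*} [Field F] {I : Fin k → Type*} [∀ i, Fintype (I i)]
    [∀ i, DecidableEq (I i)] (t : Tensor F I) : Prop :=
  ∃ B : ∀ i, Matrix (I i) (I i) F, IsBasisTuple B ∧ TightSet (supp (restrictBy B t))

/-- A complete (decreasing) flag of subspaces, `W 0 = ⊤` and `dim (W j) = dim V − j`. -/
def IsCompleteFlag (F : Type*) [Field F] {V : Type*} [AddCommGroup V] [Module F V]
    (W : ℕ → Submodule F V) : Prop :=
  Antitone W ∧ W 0 = ⊤ ∧ ∀ j : ℕ, Module.finrank F (W j) = Module.finrank F V - j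

/-- Evaluation of (the multilinear map associated with) `t` at a tuple of vectors. -/
def eval {F : Type*} [Field F] {I : Fin k → Type*} [∀ i, Fintype (I i)] [∀ i, DecidableEq (I i)]
    (t : Tensor F I) (v : ∀ i, I i → F) : F :=
  ∑ α : ∀ i, I i, (∏ i, v i (α i)) * t α

/-- The support of `t` with respect to a tuple of complete flags. -/
def suppFlag {F : Type*} [Field F] {n : Fin k → ℕ} (t : Tensor F fun i => Fin (n i))
    (W : ∀ i, ℕ → Submodule F (Fin (n i) → F)) : Set (∀ i, Fin (n i)) :=
  {α | ∃ v : ∀ i, Fin (n i) → F, (∀ i, v i ∈ W i (α i : ℕ)) ∧ eval t v ≠ 0}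

section Quantum

variable {I : Fin k → Type*} [∀ i, Fintype (I i)] [∀ i, DecidableEq (I i)]

/-- Von Neumann entropy (base 2) of a Hermitian matrix. -/
def vnEntropy {d : Type*} [Fintype d] [DecidableEq d] (ρ : Matrix d d ℂ) : ℝ :=
  if h : ρ.IsHermitian then ∑ x, -(h.eigenvalues x * Real.logb 2 (h.eigenvalues x)) else 0

/-- The `j`-th marginal (reduced density matrix) of the pure state `|t⟩⟨t| / ⟨t|t⟩`. -/
def margMat (t : Tensor ℂ I) (j : Fin k) : Matrix (I j) (I j) ℂ :=
  fun a b =>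
    (∑ α : ∀ i, I i, ∑ β : ∀ i, I i,
      if α j = a ∧ β j = b ∧ (∀ i, i ≠ j → α i = β i) then t α * star (t β) else 0) /
    ∑ α : ∀ i, I i, t α * star (t α)

/-- The logarithmic lower quantum functional `E_θ` for `θ` a distribution on `[k]`. -/
def Ewq (θ : Fin k → ℝ) (t : Tensor ℂ I) : ℝ :=
  sSup {h | ∃ A : ∀ i, Matrix (I i) (I i) ℂ, IsBasisTuple A ∧
    h = ∑ j, θ j * vnEntropy (margMat (restrictBy A t) j)}

/-- The marginal (reduced density matrix) on the legs in `S` of the pure state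
`|t⟩⟨t| / ⟨t|t⟩`. -/
def margMatSet (t : Tensor ℂ I) (S : Finset (Fin k)) :
    Matrix (∀ i : {x : Fin k // x ∈ S}, I i.1) (∀ i : {x : Fin k // x ∈ S}, I i.1) ℂ :=
  fun a b =>
    (∑ α : ∀ i, I i, ∑ β : ∀ i, I i,
      if (∀ (i : Fin k) (hi : i ∈ S), α i = a ⟨i, hi⟩ ∧ β i = b ⟨i, hi⟩) ∧
         (∀ i, i ∉ S → α i = β i)
      then t α * star (t β) else 0) /
    ∑ α : ∀ i, I i, t α * star (t α)

/-- A probability distribution on the bipartitions `{S, S̄}` of `[k]` (encoded by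
choosing a representative `S` for each bipartition occurring in the support). -/
def IsBipDist (θ : Finset (Fin k) → ℝ) : Prop :=
  (∀ S, 0 ≤ θ S) ∧ (∀ S, θ S ≠ 0 → S.Nonempty ∧ Sᶜ.Nonempty) ∧
    ∑ S : Finset (Fin k), θ S = 1

/-- The logarithmic lower quantum functional `E_θ` for `θ` a distribution on bipartitions. -/
def EwqBip (θ : Finset (Fin k) → ℝ) (t : Tensor ℂ I) : ℝ :=
  sSup {h | ∃ A : ∀ i, Matrix (I i) (I i) ℂ, IsBasisTuple A ∧
    h = ∑ S : Finset (Fin k), θ S * vnEntropy (margMatSet (restrictBy A t) S)}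

/-- The lower quantum functional `F_θ`. -/
def FwqBip (θ : Finset (Fin k) → ℝ) (t : Tensor ℂ I) : ℝ :=
  if t = 0 then 0 else (2 : ℝ) ^ EwqBip θ t

/-- Degeneration: `t` lies in the closure of the `GL × ⋯ × GL`-orbit of `s`. -/
def Degen (s t : Tensor ℂ I) : Prop :=
  t ∈ closure {u : Tensor ℂ I | ∃ A : ∀ i, Matrix (I i) (I i) ℂ,
    IsBasisTuple A ∧ restrictBy A s = u}

end Quantum

/-- Trace norm of a complex matrix: `Tr √(AᴴA)`. -/
def traceNorm {d : Type*} [Fintype d] [DecidableEq d] (A : Matrix d d ℂ) : ℝ :=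
  (((Matrix.posSemidef_conjTranspose_mul_self A).1.eigenvectorUnitary.1 *
    Matrix.diagonal (fun x => ((Real.sqrt ((Matrix.posSemidef_conjTranspose_mul_self A).1.eigenvalues x) : ℝ) : ℂ)) *
    (star (Matrix.posSemidef_conjTranspose_mul_self A).1.eigenvectorUnitary : Matrix d d ℂ)).trace).re

/-- `conjIter ρ X j = X_j ⋯ X_2 X_1 ρ X_1 X_2 ⋯ X_j`. -/
def conjIter {d : Type*} [Fintype d] (ρ : Matrix d d ℂ) {n : ℕ}
    (X : Fin n → Matrix d d ℂ) : ℕ → Matrix d d ℂ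
  | 0 => ρ
  | (j + 1) => if h : j < n then X ⟨j, h⟩ * conjIter ρ X j * X ⟨j, h⟩ else conjIter ρ X j

/-- A tricolored sum-free set in `G × G × G`. -/
def IsTriColoredSumFree {G : Type*} [AddCommGroup G] (Γ : Set (G × G × G)) : Prop :=
  (∀ a ∈ Γ, ∀ b ∈ Γ, a ≠ b → a.1 ≠ b.1 ∧ a.2.1 ≠ b.2.1 ∧ a.2.2 ≠ b.2.2) ∧
  ∀ x y z : G, (∃ a ∈ Γ, a.1 = x) → (∃ a ∈ Γ, a.2.1 = y) → (∃ a ∈ Γ, a.2.2 = z) →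
    (x + y + z = 0 ↔ (x, y, z) ∈ Γ)

/-- The maximal size `s₃(G)` of a tricolored sum-free set in `G × G × G`. -/
def s3 (G : Type*) [AddCommGroup G] : ℕ :=
  sSup {r : ℕ | ∃ Γ : Set (G × G × G), IsTriColoredSumFree Γ ∧ Γ.ncard = r}

/-- Binary entropy function (base 2), with the convention `0 · log 0 = 0`. -/
def binH (p : ℝ) : ℝ := -(p * Real.logb 2 p) - (1 - p) * Real.logb 2 (1 - p)

open Filter Topology

/-!
Fix a free diagonal `D ⊆ Φ` of size `Q(Φ)` and the weights `u` of the degeneration, bounded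
by `M`. Sort the elements `a` of `D^N` by their weight vector `(∑ⱼ u_i(a_{ij}))_i`, which takes
at most `(2MN+1)^k` values. Each fibre is a free diagonal in `Ψ^N`: an element of `Ψ^N` whose
coordinates come from the fibre has total weight `0`, while each of its `N` factors has weight
`≥ 0`, with equality only on `Φ`; so every factor lies in `Φ ∩ (D₁ × ⋯ × D_k) = D`. Hence
`Q(Φ)^N ≤ (2MN+1)^k Q(Ψ^N)`, and the polynomial factor disappears under `N`-th roots.
-/

theorem exists_card_le_card_mul_card_fiber {α β : Type*} [DecidableEq β]
    {s : Finset α} {t : Finset β} {f : α → β} (hf : ∀ a ∈ s, f a ∈ t) (ht : t.Nonempty) :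
    ∃ y ∈ t, s.card ≤ t.card * (s.filter fun x => f x = y).card := by
  have htpos : (0 : ℚ) < t.card := by exact_mod_cast ht.card_pos
  obtain ⟨y, hy, hle⟩ := Finset.exists_le_card_fiber_of_nsmul_le_card_of_maps_to hf ht
    (b := (s.card : ℚ) / t.card) (by rw [nsmul_eq_mul, mul_div_cancel₀ _ htpos.ne'])
  refine ⟨y, hy, ?_⟩
  rw [div_le_iff₀' htpos] at hle
  exact_mod_cast hle

theorem tendsto_mul_natCast_add_one_pow_rpow_inv {c : ℝ} (hc : 0 < c) (k : ℕ) :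
    Tendsto (fun N : ℕ => ((c * N + 1) ^ k) ^ (N : ℝ)⁻¹) atTop (𝓝 1) := by
  have hbase : Tendsto (fun N : ℕ => (c * N + 1) ^ (N : ℝ)⁻¹) atTop (𝓝 1) := by
    have hlin : Tendsto (fun N : ℕ => c * N + 1) atTop atTop :=
      tendsto_atTop_add_const_right _ _
        (tendsto_natCast_atTop_atTop.const_mul_atTop hc)
    -- with `x = c N + 1`, the exponent `1 / N` is `c / (x - 1)`
    refine (tendsto_rpow_div_mul_add c 1 (-1) one_ne_zero.symm).comp hlin |>.congr fun N => ?_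
    simp [div_mul_cancel_left₀ hc.ne']
  have hpow := hbase.pow k
  rw [one_pow] at hpow
  exact hpow.congr fun N => Real.rpow_pow_comm (by positivity) _ k

theorem le_of_pow_le_mul_of_tendsto_rpow_inv {r L : ℝ} {C a : ℕ → ℝ} (hr : 0 ≤ r)
    (hC : ∀ N, 0 ≤ C N) (ha : ∀ N, 0 ≤ a N) (hpow : ∀ N, r ^ N ≤ C N * a N)
    (hC1 : Tendsto (fun N => C N ^ (N : ℝ)⁻¹) atTop (𝓝 1))
    (haL : Tendsto (fun N => a N ^ (N : ℝ)⁻¹) atTop (𝓝 L)) : r ≤ L := by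
  have hCa := hC1.mul haL
  rw [one_mul] at hCa
  refine ge_of_tendsto hCa ?_
  filter_upwards [eventually_ne_atTop 0] with N hN
  calc r = (r ^ N) ^ (N : ℝ)⁻¹ := (Real.pow_rpow_inv_natCast hr hN).symm
    _ ≤ (C N * a N) ^ (N : ℝ)⁻¹ :=
        Real.rpow_le_rpow (pow_nonneg hr N) (hpow N) (by positivity)
    _ = C N ^ (N : ℝ)⁻¹ * a N ^ (N : ℝ)⁻¹ := Real.mul_rpow (hC N) (ha N)

theorem exists_pos_abs_le {ι : Type*} [Finite ι] {κ : ι → Type*} [∀ i, Finite (κ i)]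
    (u : ∀ i, κ i → ℤ) : ∃ M : ℕ, 0 < M ∧ ∀ i x, |u i x| ≤ M := by
  obtain ⟨M, hM⟩ := Finite.exists_le fun p : Σ i, κ i => (u p.1 p.2).natAbs
  refine ⟨M + 1, M.succ_pos, fun i x => ?_⟩
  rw [Int.abs_eq_natAbs]
  exact_mod_cast (hM ⟨i, x⟩).trans M.le_succ

section Combinatorial

variable {k : ℕ} {I : Fin k → Type*} {Φ Ψ D E : Set (∀ i, I i)} {N : ℕ}

theorem IsDiagonal.mono (hD : IsDiagonal D) (hE : E ⊆ D) : IsDiagonal E :=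
  fun a ha b hb => hD a (hE ha) b (hE hb)

theorem IsDiagonal.setPow (hD : IsDiagonal D) (N : ℕ) : IsDiagonal (setPow D N) := by
  intro a ha b hb hab i hi
  obtain ⟨i₀, j, hj⟩ : ∃ i₀ j, a i₀ j ≠ b i₀ j := by
    by_contra! h
    exact hab (funext fun i => funext (h i))
  have hcol : (fun i => a i j) ≠ fun i => b i j := fun h => hj (congrFun h i₀)
  exact hD _ (ha j) _ (hb j) hcol i (congrFun hi j)

theorem setPow_mono (h : D ⊆ Φ) (N : ℕ) : setPow D N ⊆ setPow Φ N :=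
  fun _ ha j => h (ha j)

theorem ncard_setPow (D : Set (∀ i, I i)) (N : ℕ) : (setPow D N).ncard = D.ncard ^ N := by
  let e : setPow D N ≃ (Fin N → D) :=
    { toFun := fun a j => ⟨fun i => a.1 i j, a.2 j⟩
      invFun := fun d => ⟨fun i j => (d j).1 i, fun j => (d j).2⟩
      left_inv := fun _ => rfl
      right_inv := fun _ => rfl }
  rw [← Nat.card_coe_set_eq, Nat.card_congr e, Nat.card_fun, Nat.card_fin,
    Nat.card_coe_set_eq]

theorem IsFreeDiagonal.subset (hD : IsFreeDiagonal D Φ) : D ⊆ Φ := by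
  rw [hD.2]
  exact Set.inter_subset_left

theorem IsFreeDiagonal.mem_of_mem_projSet (hD : IsFreeDiagonal D Φ) {a : ∀ i, I i}
    (ha : a ∈ Φ) (hproj : ∀ i, a i ∈ projSet D i) : a ∈ D := by
  rw [hD.2]
  exact ⟨ha, hproj⟩

variable [∀ i, Finite (I i)]

theorem bddAbove_ncard_isFreeDiagonal (Φ : Set (∀ i, I i)) :
    BddAbove {r : ℕ | ∃ D : Set (∀ i, I i), IsFreeDiagonal D Φ ∧ D.ncard = r} := by
  refine ⟨Nat.card (∀ i, I i), ?_⟩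
  rintro r ⟨D, -, rfl⟩
  exact Set.ncard_le_card D

theorem IsFreeDiagonal.ncard_le_Qset (hD : IsFreeDiagonal D Φ) : D.ncard ≤ Qset Φ :=
  le_csSup (bddAbove_ncard_isFreeDiagonal Φ) ⟨D, hD, rfl⟩

theorem exists_isFreeDiagonal_ncard_eq_Qset (hΦ : Qset Φ ≠ 0) :
    ∃ D, IsFreeDiagonal D Φ ∧ D.ncard = Qset Φ := by
  have hne : {r : ℕ | ∃ D : Set (∀ i, I i), IsFreeDiagonal D Φ ∧ D.ncard = r}.Nonempty := by
    by_contra hempty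
    rw [Set.not_nonempty_iff_eq_empty] at hempty
    exact hΦ (by rw [Qset, hempty, csSup_empty]; rfl)
  exact Nat.sSup_mem hne (bddAbove_ncard_isFreeDiagonal Φ)

end Combinatorial

section Weight

variable {k : ℕ} {I : Fin k → Type*} {Φ Ψ D : Set (∀ i, I i)} {N : ℕ}

def weightPow (u : ∀ i, I i → ℤ) (a : ∀ i, Fin N → I i) : Fin k → ℤ :=
  fun i => ∑ j, u i (a i j)

theorem sum_weightPow (u : ∀ i, I i → ℤ) (a : ∀ i, Fin N → I i) :
    ∑ i, weightPow u a i = ∑ j, ∑ i, u i (a i j) :=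
  Finset.sum_comm

theorem abs_weightPow_le {u : ∀ i, I i → ℤ} {M : ℤ} (hM : ∀ i x, |u i x| ≤ M)
    (a : ∀ i, Fin N → I i) (i : Fin k) : |weightPow u a i| ≤ M * N :=
  calc |weightPow u a i| ≤ ∑ j, |u i (a i j)| := Finset.abs_sum_le_sum_abs _ _
    _ ≤ ∑ _j : Fin N, M := Finset.sum_le_sum fun j _ => hM i (a i j)
    _ = M * N := by simp [mul_comm]

theorem card_weightPow_image_le [∀ i, Fintype (I i)] {u : ∀ i, I i → ℤ} {M : ℕ}
    (hM : ∀ i x, |u i x| ≤ M) (s : Finset (∀ i, Fin N → I i)) : (s.image (weightPow u)).card ≤ (2 * M * N + 1) ^ k := by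
  have hbox : s.image (weightPow u) ⊆
      Fintype.piFinset fun _ => Finset.Icc (-(M * N : ℤ)) (M * N) := by
    simp only [Finset.subset_iff, Finset.mem_image, Fintype.mem_piFinset, Finset.mem_Icc]
    rintro _ ⟨a, -, rfl⟩ i
    exact abs_le.1 (abs_weightPow_le hM a i)
  refine (Finset.card_le_card hbox).trans_eq ?_
  rw [Fintype.card_piFinset, Int.card_Icc, Finset.prod_const, Finset.card_univ,
    Fintype.card_fin,
    show (M * N : ℤ) + 1 - -(M * N) = ((2 * M * N + 1 : ℕ) : ℤ) by push_cast; ring,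
    Int.toNat_natCast]

variable {u : ∀ i, I i → ℤ} (hu0 : ∀ α ∈ Φ, ∑ i, u i (α i) = 0)
include hu0

theorem sum_weightPow_eq_zero {a : ∀ i, Fin N → I i} (ha : a ∈ setPow Φ N) :
    ∑ i, weightPow u a i = 0 := by
  rw [sum_weightPow]
  exact Finset.sum_eq_zero fun j _ => hu0 _ (ha j)

variable (hupos : ∀ α ∈ Ψ, α ∉ Φ → 0 < ∑ i, u i (α i))
include hupos

theorem mem_setPow_of_sum_weightPow_nonpos {a : ∀ i, Fin N → I i} (ha : a ∈ setPow Ψ N)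
    (hsum : ∑ i, weightPow u a i ≤ 0) : a ∈ setPow Φ N := by
  have hnonneg : ∀ j ∈ Finset.univ, 0 ≤ ∑ i, u i (a i j) := fun j _ => by
    by_cases hΦ : (fun i => a i j) ∈ Φ
    · exact (hu0 _ hΦ).ge
    · exact (hupos _ (ha j) hΦ).le
  have hzero := (Finset.sum_eq_zero_iff_of_nonneg hnonneg).1
    (le_antisymm (sum_weightPow u a ▸ hsum) (Finset.sum_nonneg hnonneg))
  intro j
  by_contra hΦ
  exact (hupos _ (ha j) hΦ).ne' (hzero j (Finset.mem_univ j))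

theorem IsFreeDiagonal.setPow_inter_weightPow_eq (hsub : Φ ⊆ Ψ) (hD : IsFreeDiagonal D Φ)
    {v : Fin k → ℤ} (hv : ∑ i, v i = 0) :
    IsFreeDiagonal (setPow D N ∩ {a | weightPow u a = v}) (setPow Ψ N) := by
  refine ⟨(hD.1.setPow N).mono Set.inter_subset_left, Set.Subset.antisymm ?_ ?_⟩
  · exact fun a ha => ⟨setPow_mono (hD.subset.trans hsub) N ha.1, fun i => ⟨a, ha, rfl⟩⟩
  rintro β ⟨hβΨ, hproj⟩
  choose w hw hwβ using hproj
  have hβv : weightPow u β = v := funext fun i => by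
    rw [← (hw i).2]
    simp only [weightPow, hwβ i]
  have hβΦ : β ∈ setPow Φ N :=
    mem_setPow_of_sum_weightPow_nonpos hu0 hupos hβΨ (by rw [hβv, hv])
  refine ⟨fun j => hD.mem_of_mem_projSet (hβΦ j) fun i => ?_, hβv⟩
  exact ⟨fun i' => w i i' j, (hw i).1 j, congrFun (hwβ i) j⟩

theorem IsFreeDiagonal.ncard_pow_le_mul_Qset [∀ i, Fintype (I i)] (hsub : Φ ⊆ Ψ)
    (hD : IsFreeDiagonal D Φ) (hDne : D.Nonempty) {M : ℕ} (hM : ∀ i x, |u i x| ≤ M) (N : ℕ) :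
    D.ncard ^ N ≤ (2 * M * N + 1) ^ k * Qset (setPow Ψ N) := by
  set s := (setPow D N).toFinite.toFinset
  have hs : s.Nonempty := by
    obtain ⟨d, hd⟩ := hDne
    exact ⟨fun i _ => d i, (Set.Finite.mem_toFinset _).2 fun _ => hd⟩
  obtain ⟨v, hv, hfiber⟩ := exists_card_le_card_mul_card_fiber
    (fun a ha => Finset.mem_image_of_mem (weightPow u) ha) (hs.image _)
  obtain ⟨a, ha, rfl⟩ := Finset.mem_image.1 hv
  have hfree := hD.setPow_inter_weightPow_eq hu0 hupos hsub (N := N)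
    (sum_weightPow_eq_zero hu0 (setPow_mono hD.subset N ((Set.Finite.mem_toFinset _).1 ha)))
  have hcoe : ((s.filter fun x => weightPow u x = weightPow u a : Finset _) : Set _) =
      setPow D N ∩ {x | weightPow u x = weightPow u a} := by
    ext
    simp [s]
  calc D.ncard ^ N = s.card := by rw [← ncard_setPow, Set.ncard_eq_toFinset_card]
    _ ≤ _ := hfiber
    _ ≤ _ := Nat.mul_le_mul (card_weightPow_image_le hM s)
      (by rw [← Set.ncard_coe_finset, hcoe]; exact hfree.ncard_le_Qset)

end Weight

/-- combinatorial degeneration: asymptotic subrank ≥ subrank. -/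
theorem statement12 {k : ℕ} {I : Fin k → Type*} [∀ i, Fintype (I i)]
    (Φ Ψ : Set (∀ i, I i)) (h : CombDegen Ψ Φ) :
    ∀ L : ℝ, Tendsto (fun N : ℕ => (Qset (setPow Ψ N) : ℝ) ^ ((N : ℝ)⁻¹)) atTop (𝓝 L) →
      (Qset Φ : ℝ) ≤ L := by
  intro L hL
  obtain ⟨hsub, u, hu0, hupos⟩ := h
  by_cases hΦ : Qset Φ = 0
  · rw [hΦ, Nat.cast_zero]
    exact ge_of_tendsto' hL fun N => Real.rpow_nonneg (Nat.cast_nonneg _) _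
  obtain ⟨D, hD, hDcard⟩ := exists_isFreeDiagonal_ncard_eq_Qset hΦ
  have hDne : D.Nonempty := Set.nonempty_of_ncard_ne_zero (hDcard ▸ hΦ)
  obtain ⟨M, hM0, hM⟩ := exists_pos_abs_le u
  refine le_of_pow_le_mul_of_tendsto_rpow_inv (C := fun N => (2 * M * N + 1 : ℝ) ^ k)
    (Nat.cast_nonneg _) (fun N => by positivity) (fun N => Nat.cast_nonneg _) (fun N => ?_)
    (tendsto_mul_natCast_add_one_pow_rpow_inv (by positivity) k) hL
  exact_mod_cast hDcard ▸ hD.ncard_pow_le_mul_Qset hu0 hupos hsub hDne hM N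

end CVZ

end
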